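/- For λ ∈ (0,1/2)^ℕ, the difference set of the central Cantor set equals the intersection of the difference sets of the stages: C(λ) - C(λ) = ⋂_{n} (C_n(λ) - C_n(λ)). -/
import Mathlib


open Set Pointwise Filter MeasureTheory

noncomputable section

/-- `dseq lam n = λ₁ ⋯ λₙ` (with `lam i` the `i`-th term, `1`-indexed); `dseq lam 0 = 1`. -/
def dseq (lam : ℕ → ℝ) (n : ℕ) : ℝ := ∏ i ∈ Finset.Icc 1 n, lam i

/-- Left endpoint of the interval `I_p` of the central Cantor construction. -/
def leftI (lam : ℕ → ℝ) (p : List Bool) : ℝ :=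
  ∑ i : Fin p.length, if p.get i then dseq lam (i : ℕ) - dseq lam ((i : ℕ) + 1) else 0

/-- The closed interval `I_p` of the central Cantor construction. -/
def Iset (lam : ℕ → ℝ) (p : List Bool) : Set ℝ :=
  Icc (leftI lam p) (leftI lam p + dseq lam p.length)

/-- The `n`-th stage `C_n(λ)` of the central Cantor construction. -/
def CnSet (lam : ℕ → ℝ) (n : ℕ) : Set ℝ :=
  ⋃ p ∈ {p : List Bool | p.length = n}, Iset lam p

/-- The central Cantor set `C(λ)`. -/
def CSet (lam : ℕ → ℝ) : Set ℝ := ⋂ n, CnSet lam n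

/-- `J_t = I_p - I_q` where `t i = p i - q i + 1` (pointwise set difference). -/
def Jset (lam : ℕ → ℝ) (t : List (Fin 3)) : Set ℝ :=
  Iset lam (t.map fun a => decide (a = 2)) - Iset lam (t.map fun a => decide (a = 0))


lemma dseq_pos (lam : ℕ → ℝ) (hlam : ∀ n, 1 ≤ n → lam n ∈ Ioo (0 : ℝ) (1 / 2)) (n : ℕ) :
    0 < dseq lam n := by
  apply Finset.prod_pos
  intro i hi
  exact (hlam i (Finset.mem_Icc.mp hi).1).1

lemma dseq_succ (lam : ℕ → ℝ) (n : ℕ) : dseq lam (n+1) = dseq lam n * lam (n+1) := by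
  rw [dseq, dseq, Finset.prod_Icc_succ_top (by omega)]

lemma dseq_succ_le (lam : ℕ → ℝ) (hlam : ∀ n, 1 ≤ n → lam n ∈ Ioo (0 : ℝ) (1 / 2)) (n : ℕ) :
    dseq lam (n+1) ≤ dseq lam n := by
  rw [dseq_succ]
  nlinarith [dseq_pos lam hlam n, (hlam (n+1) (by omega)).1, (hlam (n+1) (by omega)).2]

lemma leftI_eq (lam : ℕ → ℝ) (p : List Bool) :
    leftI lam p = ∑ i ∈ Finset.range p.length,
      if p.getD i false then dseq lam i - dseq lam (i + 1) else 0 := by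
  rw [leftI, ← Fin.sum_univ_eq_sum_range]
  apply Finset.sum_congr rfl
  intro i _
  congr 1
  simp [List.getD_eq_getElem?_getD, List.getElem?_eq_getElem i.isLt]

lemma leftI_append (lam : ℕ → ℝ) (p : List Bool) (b : Bool) :
    leftI lam (p ++ [b]) = leftI lam p +
      (if b then dseq lam p.length - dseq lam (p.length + 1) else 0) := by
  rw [leftI_eq, leftI_eq]
  simp only [List.length_append, List.length_singleton]
  rw [Finset.sum_range_succ]
  congr 1
  · apply Finset.sum_congr rfl
    intro i hi
    rw [List.getD_append _ _ _ _ (Finset.mem_range.mp hi)]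
  · rw [List.getD_append_right _ _ _ _ (le_refl _)]
    simp

lemma Iset_append_subset (lam : ℕ → ℝ) (hlam : ∀ n, 1 ≤ n → lam n ∈ Ioo (0 : ℝ) (1 / 2))
    (p : List Bool) (b : Bool) : Iset lam (p ++ [b]) ⊆ Iset lam p := by
  have h1 := dseq_succ_le lam hlam p.length
  have h2 := dseq_pos lam hlam (p.length + 1)
  rw [Iset, Iset, leftI_append]
  simp only [List.length_append, List.length_singleton]
  apply Icc_subset_Icc
  · cases b <;> simp <;> linarith
  · cases b <;> simp <;> linarith

lemma CnSet_succ_subset (lam : ℕ → ℝ) (hlam : ∀ n, 1 ≤ n → lam n ∈ Ioo (0 : ℝ) (1 / 2))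
    (n : ℕ) : CnSet lam (n+1) ⊆ CnSet lam n := by
  intro x hx
  rw [CnSet, mem_iUnion₂] at hx
  obtain ⟨p, hp, hxp⟩ := hx
  have hne : p ≠ [] := by intro h; simp [h] at hp
  have hdec : p.dropLast ++ [p.getLast hne] = p := List.dropLast_append_getLast hne
  rw [CnSet, mem_iUnion₂]
  refine ⟨p.dropLast, ?_, ?_⟩
  · simp only [mem_setOf_eq, List.length_dropLast]
    have : p.length = n + 1 := hp
    omega
  · apply Iset_append_subset lam hlam p.dropLast (p.getLast hne)
    rw [hdec]; exact hxp

lemma isCompact_CnSet (lam : ℕ → ℝ) (n : ℕ) : IsCompact (CnSet lam n) := by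
  have hfin : {p : List Bool | p.length = n}.Finite := List.finite_length_eq Bool n
  exact hfin.isCompact_biUnion (fun p _ => isCompact_Icc)

/-- `C(λ) - C(λ) = ⋂ₙ (Cₙ(λ) - Cₙ(λ))`. -/
theorem CSet_sub_CSet_eq_iInter (lam : ℕ → ℝ)
    (hlam : ∀ n, 1 ≤ n → lam n ∈ Ioo (0 : ℝ) (1 / 2)) :
    CSet lam - CSet lam = ⋂ n, (CnSet lam n - CnSet lam n) := by
  ext x
  constructor
  · intro hx
    rw [mem_iInter]
    intro n
    obtain ⟨a, ha, b, hb, rfl⟩ := mem_sub.mp hx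
    exact sub_mem_sub (mem_iInter.mp ha n) (mem_iInter.mp hb n)
  · intro hx
    set K : ℕ → Set (ℝ × ℝ) :=
      fun n => (CnSet lam n ×ˢ CnSet lam n) ∩ {ab | ab.1 - ab.2 = x} with hK
    have hKne : ∀ n, (K n).Nonempty := by
      intro n
      obtain ⟨a, ha, b, hb, hab⟩ := mem_sub.mp (mem_iInter.mp hx n)
      exact ⟨(a, b), ⟨⟨ha, hb⟩, hab⟩⟩
    have hKsub : ∀ n, K (n + 1) ⊆ K n := by
      intro n
      apply inter_subset_inter_left
      exact prod_mono (CnSet_succ_subset lam hlam n) (CnSet_succ_subset lam hlam n)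
    have hcl : IsClosed {ab : ℝ × ℝ | ab.1 - ab.2 = x} :=
      isClosed_singleton.preimage (continuous_fst.sub continuous_snd)
    have hKclosed : ∀ n, IsClosed (K n) := fun n =>
      (((isCompact_CnSet lam n).isClosed).prod ((isCompact_CnSet lam n).isClosed)).inter hcl
    have hK0 : IsCompact (K 0) :=
      ((isCompact_CnSet lam 0).prod (isCompact_CnSet lam 0)).inter_right hcl
    obtain ⟨⟨a, b⟩, hab⟩ :=
      IsCompact.nonempty_iInter_of_sequence_nonempty_isCompact_isClosed K hKsub hKne hK0 hKclosed
    rw [mem_iInter] at hab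
    refine mem_sub.mpr ⟨a, ?_, b, ?_, (hab 0).2⟩
    · exact mem_iInter.mpr fun n => (hab n).1.1
    · exact mem_iInter.mpr fun n => (hab n).1.2
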